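/- arXiv:2603.21533 — 5 statements merged into one kernel-verified Lean document; each statement's English description precedes it below -/
import Mathlib

section
/- Let S be a finite set of drivers, each driver j having weight wⱼ ∈ [0, w_max] and acceptance probability pⱼ ∈ [0,1], with independent acceptance indicators Xⱼ ~ Bernoulli(pⱼ). Define the First-Accept valuation F(S) = Σ_{j∈S} wⱼ · E[ 1{Σ_{k∈S} Xₖ ≥ 1} · Xⱼ / Σ_{k∈S} Xₖ ]. Then F(S) = Σ_{j∈S} wⱼ pⱼ ∫₀¹ ∏_{k∈S\{j}} (1 - pₖ + pₖ t) dt. -/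
open Finset

/-- The product-measure weight of a realization `x` of independent
Bernoulli(pⱼ) acceptance indicators. -/
noncomputable def bernWeight {ι : Type*} [Fintype ι] (p : ι → ℝ) (x : ι → Bool) : ℝ :=
  ∏ k, if x k then p k else 1 - p k

/-- The First-Accept valuation: the expected weight of a uniformly random accepting
driver of `S` (0 if no driver accepts; note `0 / 0 = 0` in Lean handles the
no-acceptor case, as the numerator is then an empty sum). -/
noncomputable def FA {ι : Type*} [Fintype ι] [DecidableEq ι]
    (w p : ι → ℝ) (S : Finset ι) : ℝ :=
  ∑ x : ι → Bool, bernWeight p x *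
    ((∑ j ∈ S.filter (fun j => x j = true), w j) /
      ((S.filter (fun j => x j = true)).card : ℝ))

/- Marginalization: sum over all Boolean vectors of a product factorizes. -/
lemma sum_prod_bool {ι : Type*} [Fintype ι] [DecidableEq ι] (h : ι → Bool → ℝ) :
    ∑ x : ι → Bool, ∏ k, h k (x k) = ∏ k, (h k true + h k false) := by
  have : ∀ k : ι, h k true + h k false = ∑ b : Bool, h k b := by
    intro k; simp [Fintype.sum_bool]
  simp_rw [this]
  rw [Finset.prod_univ_sum (fun _ => (Finset.univ : Finset Bool)) h,
    Fintype.piFinset_univ]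

/- The total Bernoulli weight of the slice `{x : S.filter x = U}`. -/
lemma bern_slice {ι : Type*} [Fintype ι] [DecidableEq ι] (p : ι → ℝ)
    (S U : Finset ι) (hU : U ⊆ S) :
    ∑ x : ι → Bool,
        (if S.filter (fun j => x j = true) = U then bernWeight p x else 0)
      = (∏ k ∈ U, p k) * ∏ k ∈ S \ U, (1 - p k) := by
  have key : ∀ x : ι → Bool,
      (if S.filter (fun j => x j = true) = U then bernWeight p x else 0)
        = ∏ k, ((if x k then p k else 1 - p k) *
            (if k ∈ S then (if x k = decide (k ∈ U) then (1:ℝ) else 0) else 1)) := by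
    intro x
    rw [Finset.prod_mul_distrib]
    have hcond : (S.filter (fun j => x j = true) = U) ↔
        ∀ k ∈ S, x k = decide (k ∈ U) := by
      constructor
      · intro hfil k hkS
        by_cases hxk : x k = true
        · have : k ∈ U := by
            rw [← hfil]; exact Finset.mem_filter.2 ⟨hkS, hxk⟩
          simp [hxk, this]
        · have hkU : k ∉ U := by
            intro hkU
            rw [← hfil] at hkU
            exact hxk (Finset.mem_filter.1 hkU).2
          simp at hxk
          simp [hxk, hkU]
      · intro hall
        ext k
        simp only [Finset.mem_filter]
        constructor
        · rintro ⟨hkS, hxk⟩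
          have := hall k hkS
          rw [hxk] at this
          exact of_decide_eq_true this.symm
        · intro hkU
          refine ⟨hU hkU, ?_⟩
          rw [hall k (hU hkU)]
          simp [hkU]
    have hind : (∏ k : ι, (if k ∈ S then (if x k = decide (k ∈ U) then (1:ℝ) else 0) else 1))
        = if S.filter (fun j => x j = true) = U then 1 else 0 := by
      rw [Finset.prod_ite_mem Finset.univ S, Finset.univ_inter,
        Finset.prod_boole]
      by_cases h : ∀ k ∈ S, x k = decide (k ∈ U)
      · rw [if_pos h, if_pos (hcond.2 h)]
      · have : ¬ S.filter (fun j => x j = true) = U := fun hc => h (hcond.1 hc)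
        rw [if_neg h, if_neg this]
    rw [hind, bernWeight]
    by_cases h : S.filter (fun j => x j = true) = U <;> simp [h]
  simp_rw [key]
  rw [sum_prod_bool (fun k b => (if b = true then p k else 1 - p k) *
    (if k ∈ S then (if b = decide (k ∈ U) then (1:ℝ) else 0) else 1))]
  have hval : ∀ k : ι,
      ((if (true : Bool) then p k else 1 - p k) *
          (if k ∈ S then (if (true : Bool) = decide (k ∈ U) then (1:ℝ) else 0) else 1)
        + (if (false : Bool) then p k else 1 - p k) *
          (if k ∈ S then (if (false : Bool) = decide (k ∈ U) then (1:ℝ) else 0) else 1))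
        = if k ∈ S then (if k ∈ U then p k else 1 - p k) else 1 := by
    intro k
    by_cases hkS : k ∈ S <;> by_cases hkU : k ∈ U <;>
      (try simp [hkS, hkU]) <;> (try ring)
  rw [Finset.prod_congr rfl (fun k _ => hval k)]
  rw [Finset.prod_ite_mem Finset.univ S, Finset.univ_inter, Finset.prod_ite]
  congr 1
  · congr 1
    rw [Finset.filter_mem_eq_inter, Finset.inter_eq_right.2 hU]
  · congr 1
    rw [Finset.sdiff_eq_filter]

/- Expectation of a function of the accepted set, as a sum over subsets. -/
lemma bern_expectation {ι : Type*} [Fintype ι] [DecidableEq ι] (p : ι → ℝ)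
    (S : Finset ι) (f : Finset ι → ℝ) :
    ∑ x : ι → Bool, bernWeight p x * f (S.filter (fun j => x j = true))
      = ∑ U ∈ S.powerset, ((∏ k ∈ U, p k) * ∏ k ∈ S \ U, (1 - p k)) * f U := by
  have : ∀ U ∈ S.powerset,
      ((∏ k ∈ U, p k) * ∏ k ∈ S \ U, (1 - p k)) * f U
        = ∑ x : ι → Bool,
            (if S.filter (fun j => x j = true) = U then bernWeight p x * f U else 0) := by
    intro U hUmem
    rw [← bern_slice p S U (Finset.mem_powerset.1 hUmem), Finset.sum_mul]
    congr 1; ext x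
    by_cases h : S.filter (fun j => x j = true) = U <;> simp [h]
  rw [Finset.sum_congr rfl this, Finset.sum_comm]
  congr 1; ext x
  rw [Finset.sum_ite_eq S.powerset (S.filter (fun j => x j = true))
    (fun U => bernWeight p x * f U)]
  simp [Finset.filter_subset]

/- The integral of the product expands as a sum over subsets. -/
lemma integral_prod_expand {ι : Type*} [DecidableEq ι] (p : ι → ℝ) (T : Finset ι) :
    (∫ t in (0:ℝ)..1, ∏ k ∈ T, (1 - p k + p k * t))
      = ∑ V ∈ T.powerset,
          ((∏ k ∈ V, p k) * ∏ k ∈ T \ V, (1 - p k)) * (1 / ((V.card : ℝ) + 1)) := by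
  have hexp : ∀ t : ℝ, ∏ k ∈ T, (1 - p k + p k * t)
      = ∑ V ∈ T.powerset,
          ((∏ k ∈ V, p k) * ∏ k ∈ T \ V, (1 - p k)) * t ^ V.card := by
    intro t
    have : ∀ k ∈ T, (1 - p k + p k * t) = (p k * t) + (1 - p k) := by
      intro k _; ring
    rw [Finset.prod_congr rfl this, Finset.prod_add]
    refine Finset.sum_congr rfl fun V _ => ?_
    rw [Finset.prod_mul_distrib, Finset.prod_const]
    ring
  simp_rw [hexp]
  rw [intervalIntegral.integral_finset_sum]
  · refine Finset.sum_congr rfl fun V _ => ?_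
    rw [intervalIntegral.integral_const_mul, integral_pow]
    norm_num
  · intro V _
    exact (continuous_const.mul (continuous_pow V.card)).intervalIntegrable 0 1

/-- Integral representation of the First-Accept valuation:
`F(S) = Σ_{j∈S} wⱼ pⱼ ∫₀¹ ∏_{k∈S\{j}} (1 - pₖ + pₖ t) dt`. -/
theorem stmt_3 {ι : Type*} [Fintype ι] [DecidableEq ι]
    (w p : ι → ℝ) (wmax : ℝ)
    (hw : ∀ j, 0 ≤ w j ∧ w j ≤ wmax)
    (hp : ∀ j, 0 ≤ p j ∧ p j ≤ 1)
    (S : Finset ι) :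
    FA w p S
      = ∑ j ∈ S, w j * p j * ∫ t in (0:ℝ)..1, ∏ k ∈ S.erase j, (1 - p k + p k * t) := by
  rw [FA, bern_expectation p S (fun U => (∑ j ∈ U, w j) / (U.card : ℝ))]
  -- expand each integral on the RHS
  have hRHS : ∀ j ∈ S,
      w j * p j * ∫ t in (0:ℝ)..1, ∏ k ∈ S.erase j, (1 - p k + p k * t)
        = ∑ V ∈ (S.erase j).powerset,
            w j * p j * (((∏ k ∈ V, p k) * ∏ k ∈ (S.erase j) \ V, (1 - p k))
              * (1 / ((V.card : ℝ) + 1))) := by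
    intro j _
    rw [integral_prod_expand, Finset.mul_sum]
  rw [Finset.sum_congr rfl hRHS]
  -- expand the LHS into a double sum and swap
  have hLHS : ∀ U ∈ S.powerset,
      ((∏ k ∈ U, p k) * ∏ k ∈ S \ U, (1 - p k)) * ((∑ j ∈ U, w j) / (U.card : ℝ))
        = ∑ j ∈ S, (if j ∈ U then
            ((∏ k ∈ U, p k) * ∏ k ∈ S \ U, (1 - p k)) * (w j / (U.card : ℝ)) else 0) := by
    intro U hUmem
    rw [Finset.sum_ite_mem, Finset.inter_comm,
      Finset.inter_eq_left.2 (Finset.mem_powerset.1 hUmem),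
      Finset.sum_div, Finset.mul_sum]
  rw [Finset.sum_congr rfl hLHS, Finset.sum_comm]
  refine Finset.sum_congr rfl fun j hjS => ?_
  rw [Finset.sum_ite, Finset.sum_const_zero, add_zero]
  refine Finset.sum_nbij' (fun U => U.erase j) (fun V => insert j V) ?_ ?_ ?_ ?_ ?_
  · intro U hUm
    simp only [Finset.mem_filter, Finset.mem_powerset] at hUm
    exact Finset.mem_powerset.2 (Finset.erase_subset_erase j hUm.1)
  · intro V hVm
    simp only [Finset.mem_powerset] at hVm
    refine Finset.mem_filter.2 ⟨Finset.mem_powerset.2 ?_, Finset.mem_insert_self j V⟩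
    exact Finset.insert_subset hjS (hVm.trans (Finset.erase_subset j S))
  · intro U hUm
    simp only [Finset.mem_filter, Finset.mem_powerset] at hUm
    exact Finset.insert_erase hUm.2
  · intro V hVm
    simp only [Finset.mem_powerset] at hVm
    have : j ∉ V := fun h => (Finset.mem_erase.1 (hVm h)).1 rfl
    exact Finset.erase_insert this
  · intro U hUm
    simp only [Finset.mem_filter, Finset.mem_powerset] at hUm
    obtain ⟨hUS', hjU⟩ := hUm
    have hprod : ∏ k ∈ U, p k = p j * ∏ k ∈ U.erase j, p k :=
      (Finset.mul_prod_erase U p hjU).symm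
    have hsdiff : S \ U = (S.erase j) \ (U.erase j) := by
      ext k
      simp only [Finset.mem_sdiff, Finset.mem_erase]
      by_cases hk : k = j
      · subst hk; simp [hjU, hjS]
      · simp [hk]
    have hcard : (U.card : ℝ) = ((U.erase j).card : ℝ) + 1 := by
      rw [← Finset.card_erase_add_one hjU]; push_cast; ring
    rw [hprod, hsdiff, hcard]
    field_simp
end

section
/- Let S be a finite set of drivers with weights wⱼ and independent Bernoulli acceptance indicators with probabilities pⱼ, and let F denote the First-Accept valuation. If d ∉ S is a driver with w_d ≥ max_{j∈S} wⱼ, then F(S ∪ {d}) ≥ F(S). -/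
open Finset

/-- Adding a driver of maximum weight never decreases the First-Accept valuation. -/
theorem stmt_4 {ι : Type*} [Fintype ι] [DecidableEq ι]
    (w p : ι → ℝ)
    (hw : ∀ j, 0 ≤ w j)
    (hp : ∀ j, 0 ≤ p j ∧ p j ≤ 1)
    (S : Finset ι) (d : ι) (hd : d ∉ S)
    (hmax : ∀ j ∈ S, w j ≤ w d) :
    FA w p S ≤ FA w p (insert d S) := by
  unfold FA
  apply Finset.sum_le_sum
  intro x _
  have hbw : 0 ≤ bernWeight p x := by
    apply Finset.prod_nonneg
    intro k _
    by_cases h : x k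
    · simpa [h] using (hp k).1
    · have := (hp k).2; simp [h]; linarith
  apply mul_le_mul_of_nonneg_left _ hbw
  by_cases hxd : x d = true
  · rw [Finset.filter_insert, if_pos hxd]
    set A := S.filter (fun j => x j = true) with hA
    have hdA : d ∉ A := fun h => hd (Finset.mem_of_mem_filter d h)
    rw [Finset.sum_insert hdA, Finset.card_insert_of_notMem hdA]
    have ht : ∑ j ∈ A, w j ≤ (A.card : ℝ) * w d := by
      calc ∑ j ∈ A, w j ≤ ∑ _j ∈ A, w d :=
            Finset.sum_le_sum (fun j hj => hmax j (Finset.mem_of_mem_filter j hj))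
        _ = (A.card : ℝ) * w d := by rw [Finset.sum_const, nsmul_eq_mul]
    have htnn : 0 ≤ ∑ j ∈ A, w j := Finset.sum_nonneg fun j _ => hw j
    rcases Nat.eq_zero_or_pos A.card with hc | hc
    · have hAe : A = ∅ := Finset.card_eq_zero.mp hc
      simp [hAe]
      exact hw d
    · have hc' : (0:ℝ) < A.card := by exact_mod_cast hc
      rw [div_le_div_iff₀ hc' (by push_cast; linarith)]
      push_cast
      nlinarith
  · rw [Finset.filter_insert, if_neg hxd]
end

section
/- Fix a finite set T of drivers with weights wⱼ ≥ 0 and probabilities pⱼ ∈ [0,1]. Define g_T(t) = ∏_{k∈T}(1−pₖ+pₖt), B(T) = ∫₀¹ g_T(t) dt, and A(T) = ∫₀¹ (1−t) Σ_{j∈T} wⱼpⱼ ∏_{k∈T\{j}}(1−pₖ+pₖt) dt, and the threshold τ(T) = A(T)/B(T). If driver d ∉ T satisfies w_d ≥ τ(T), then τ(T ∪ {d}) ≤ 3 w_d. -/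
open Finset

/-- `B(T) = ∫₀¹ ∏_{k∈T}(1−pₖ+pₖt) dt`. -/
noncomputable def Bint {ι : Type*} [DecidableEq ι] (p : ι → ℝ) (T : Finset ι) : ℝ :=
  ∫ t in (0:ℝ)..1, ∏ k ∈ T, (1 - p k + p k * t)

/-- `A(T) = ∫₀¹ (1−t) Σ_{j∈T} wⱼpⱼ ∏_{k∈T\{j}}(1−pₖ+pₖt) dt`. -/
noncomputable def Aint {ι : Type*} [DecidableEq ι] (w p : ι → ℝ) (T : Finset ι) : ℝ :=
  ∫ t in (0:ℝ)..1, (1 - t) * ∑ j ∈ T, w j * p j * ∏ k ∈ T.erase j, (1 - p k + p k * t)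

/-- The threshold `τ(T) = A(T)/B(T)`. -/
noncomputable def tau {ι : Type*} [DecidableEq ι] (w p : ι → ℝ) (T : Finset ι) : ℝ :=
  Aint w p T / Bint p T

section Aux

lemma gprod_cont {ι : Type*} [DecidableEq ι] (p : ι → ℝ) (T : Finset ι) :
    Continuous fun t : ℝ => ∏ k ∈ T, (1 - p k + p k * t) :=
  continuous_finset_prod _ fun k _ =>
    (continuous_const.add (continuous_const.mul continuous_id))

lemma gprod_nonneg {ι : Type*} [DecidableEq ι] (p : ι → ℝ)
    (hp : ∀ j, 0 ≤ p j ∧ p j ≤ 1) (T : Finset ι) {t : ℝ} (ht0 : 0 ≤ t) :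
    0 ≤ ∏ k ∈ T, (1 - p k + p k * t) :=
  Finset.prod_nonneg fun k _ => by nlinarith [(hp k).1, (hp k).2]

/-- Chebyshev-type inequality: for a function increasing on `[0,1]`,
`∫₀¹ (1-t) g(t) dt ≤ (∫₀¹ g)/2`. -/
lemma cheb_half (g : ℝ → ℝ) (hc : Continuous g)
    (hm : ∀ s ∈ Set.Icc (0:ℝ) 1, ∀ t ∈ Set.Icc (0:ℝ) 1, s ≤ t → g s ≤ g t) :
    ∫ t in (0:ℝ)..1, (1 - t) * g t ≤ (∫ t in (0:ℝ)..1, g t) / 2 := by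
  have hc1 : Continuous fun t : ℝ => (1 - 2*t) * g t :=
    (continuous_const.sub (continuous_const.mul continuous_id)).mul hc
  have hc2 : Continuous fun t : ℝ => (1 - 2*(1 - t)) * g (1 - t) :=
    ((continuous_const.sub (continuous_const.mul
      (continuous_const.sub continuous_id))).mul
      (hc.comp (continuous_const.sub continuous_id)))
  have hint1 : IntervalIntegrable (fun t => (1 - 2*t) * g t) MeasureTheory.volume 0 1 :=
    hc1.intervalIntegrable _ _
  have hint2 : IntervalIntegrable (fun t => (1 - 2*(1 - t)) * g (1 - t))
      MeasureTheory.volume 0 1 := hc2.intervalIntegrable _ _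
  have hintg : IntervalIntegrable g MeasureTheory.volume 0 1 := hc.intervalIntegrable _ _
  set I : ℝ := ∫ t in (0:ℝ)..1, (1 - 2*t) * g t with hI
  have hsub : ∫ t in (0:ℝ)..1, (1 - 2*(1 - t)) * g (1 - t) = I := by
    have := intervalIntegral.integral_comp_sub_left (a := (0:ℝ)) (b := 1)
      (fun t => (1 - 2*t) * g t) 1
    simpa using this
  have hIle : I ≤ 0 := by
    have hsum : I + I = ∫ t in (0:ℝ)..1,
        ((1 - 2*t) * g t + (1 - 2*(1 - t)) * g (1 - t)) := by
      rw [intervalIntegral.integral_add hint1 hint2, hsub]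
    have hptwise : ∀ t ∈ Set.Icc (0:ℝ) 1,
        (1 - 2*t) * g t + (1 - 2*(1 - t)) * g (1 - t) ≤ (0:ℝ) := by
      intro t ht
      obtain ⟨ht0, ht1⟩ := ht
      have key : (1 - 2*t) * g t + (1 - 2*(1 - t)) * g (1 - t)
          = (1 - 2*t) * (g t - g (1 - t)) := by ring
      rw [key]
      rcases le_total t (1/2) with h | h
      · have hgle : g t ≤ g (1 - t) :=
          hm t ⟨ht0, ht1⟩ (1 - t) ⟨by linarith, by linarith⟩ (by linarith)
        nlinarith
      · have hgle : g (1 - t) ≤ g t :=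
          hm (1 - t) ⟨by linarith, by linarith⟩ t ⟨ht0, ht1⟩ (by linarith)
        nlinarith
    have hle : I + I ≤ ∫ _t in (0:ℝ)..1, (0:ℝ) := by
      rw [hsum]
      exact intervalIntegral.integral_mono_on (by norm_num)
        (hint1.add hint2) intervalIntegrable_const hptwise
    simp only [intervalIntegral.integral_const, smul_zero] at hle
    linarith
  have hcomb : (fun t : ℝ => g t + (1 - 2*t) * g t) = fun t : ℝ => 2 * ((1 - t) * g t) := by
    funext t; ring
  have hsplit : (∫ t in (0:ℝ)..1, g t) + I = 2 * ∫ t in (0:ℝ)..1, (1 - t) * g t := by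
    rw [hI, ← intervalIntegral.integral_add hintg hint1, hcomb,
      intervalIntegral.integral_const_mul]
  linarith

end Aux

/-- Threshold stability: if `w_d ≥ τ(T)` then `τ(T ∪ {d}) ≤ 3 w_d`. -/
theorem stmt_7 {ι : Type*} [DecidableEq ι]
    (w p : ι → ℝ)
    (hw : ∀ j, 0 ≤ w j)
    (hp : ∀ j, 0 ≤ p j ∧ p j ≤ 1)
    (T : Finset ι) (d : ι) (hd : d ∉ T)
    (hthresh : tau w p T ≤ w d) :
    tau w p (insert d T) ≤ 3 * w d := by
  obtain ⟨hpd0, hpd1⟩ := hp d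
  set g : ℝ → ℝ := fun t => ∏ k ∈ T, (1 - p k + p k * t) with hgdef
  set h : ℝ → ℝ := fun t =>
    ∑ j ∈ T, w j * p j * ∏ k ∈ T.erase j, (1 - p k + p k * t) with hhdef
  have hgc : Continuous g := gprod_cont p T
  have hhc : Continuous h :=
    continuous_finset_sum _ fun j _ => continuous_const.mul (gprod_cont p _)
  have hgnn : ∀ t ∈ Set.Icc (0:ℝ) 1, 0 ≤ g t := fun t ht =>
    gprod_nonneg p hp T ht.1
  have hhnn : ∀ t ∈ Set.Icc (0:ℝ) 1, 0 ≤ h t := fun t ht =>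
    Finset.sum_nonneg fun j _ =>
      mul_nonneg (mul_nonneg (hw j) (hp j).1) (gprod_nonneg p hp _ ht.1)
  have hgmono : ∀ s ∈ Set.Icc (0:ℝ) 1, ∀ t ∈ Set.Icc (0:ℝ) 1, s ≤ t → g s ≤ g t := by
    intro s hs t ht hst
    refine Finset.prod_le_prod (fun k _ => by nlinarith [(hp k).1, (hp k).2, hs.1])
      (fun k _ => by nlinarith [(hp k).1])
  -- integrability
  have hig : IntervalIntegrable g MeasureTheory.volume 0 1 := hgc.intervalIntegrable _ _
  have hic : Continuous fun t : ℝ => (1 - t) * g t :=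
    (continuous_const.sub continuous_id).mul hgc
  have hiC : IntervalIntegrable (fun t => (1 - t) * g t) MeasureTheory.volume 0 1 :=
    hic.intervalIntegrable _ _
  set B : ℝ := Bint p T with hBdef
  set C : ℝ := ∫ t in (0:ℝ)..1, (1 - t) * g t with hCdef
  -- B > 0
  have hBpos : 0 < B := by
    have hpow : ∀ t ∈ Set.Icc (0:ℝ) 1, t ^ T.card ≤ g t := by
      intro t ht
      calc t ^ T.card = ∏ _k ∈ T, t := by rw [Finset.prod_const]
        _ ≤ g t := Finset.prod_le_prod (fun k _ => ht.1)
            (fun k _ => by nlinarith [(hp k).1, (hp k).2, ht.1, ht.2])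
    have hle : ∫ t in (0:ℝ)..1, t ^ T.card ≤ B := by
      rw [hBdef]
      exact intervalIntegral.integral_mono_on (by norm_num)
        ((continuous_pow _).intervalIntegrable _ _) hig hpow
    rw [integral_pow] at hle
    have : (0:ℝ) < 1 / (T.card + 1) := by positivity
    calc (0:ℝ) < 1 / (T.card + 1) := this
      _ ≤ B := by
        refine le_trans (le_of_eq ?_) hle
        push_cast; ring
  have hC0 : 0 ≤ C := by
    rw [hCdef]
    apply intervalIntegral.integral_nonneg (by norm_num)
    intro t ht
    exact mul_nonneg (by linarith [ht.2]) (hgnn t ht)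
  have hChalf : C ≤ B / 2 := cheb_half g hgc hgmono
  -- A(T) ≤ w d * B
  have hA : Aint w p T ≤ w d * B := by
    have h' := hthresh
    rw [tau] at h'
    exact (div_le_iff₀ hBpos).mp h' 
  -- B(insert d T) = B - p d * C
  have hBins : Bint p (insert d T) = B - p d * C := by
    rw [Bint]
    have hrw : ∀ t : ℝ, ∏ k ∈ insert d T, (1 - p k + p k * t)
        = g t - p d * ((1 - t) * g t) := by
      intro t
      rw [Finset.prod_insert hd, hgdef]
      ring
    simp only [hrw]
    rw [intervalIntegral.integral_sub hig (hiC.const_mul (p d)),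
      intervalIntegral.integral_const_mul, hBdef, hCdef, Bint]
  have hBinspos : B / 2 ≤ Bint p (insert d T) := by
    rw [hBins]
    nlinarith
  -- A(insert d T) = w d * p d * C + D
  have hichf : Continuous fun t : ℝ => (1 - t) * ((1 - p d + p d * t) * h t) :=
    (continuous_const.sub continuous_id).mul
      (((continuous_const.add (continuous_const.mul continuous_id))).mul hhc)
  have hiD : IntervalIntegrable (fun t => (1 - t) * ((1 - p d + p d * t) * h t))
      MeasureTheory.volume 0 1 := hichf.intervalIntegrable _ _
  have hih : IntervalIntegrable (fun t => (1 - t) * h t) MeasureTheory.volume 0 1 :=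
    ((continuous_const.sub continuous_id).mul hhc).intervalIntegrable _ _
  set D : ℝ := ∫ t in (0:ℝ)..1, (1 - t) * ((1 - p d + p d * t) * h t) with hDdef
  have hAins : Aint w p (insert d T) = w d * p d * C + D := by
    rw [Aint]
    have hrw : ∀ t : ℝ, (1 - t) * ∑ j ∈ insert d T, w j * p j *
          ∏ k ∈ (insert d T).erase j, (1 - p k + p k * t)
        = w d * p d * ((1 - t) * g t) + (1 - t) * ((1 - p d + p d * t) * h t) := by
      intro t
      rw [Finset.sum_insert hd, Finset.erase_insert hd]
      have hj : ∀ j ∈ T, w j * p j * ∏ k ∈ (insert d T).erase j, (1 - p k + p k * t)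
          = (1 - p d + p d * t) * (w j * p j * ∏ k ∈ T.erase j, (1 - p k + p k * t)) := by
        intro j hj
        have hne : d ≠ j := by rintro rfl; exact hd hj
        rw [Finset.erase_insert_of_ne hne]
        rw [Finset.prod_insert (fun hmem => hd (Finset.mem_of_mem_erase hmem))]
        ring
      rw [Finset.sum_congr rfl hj, ← Finset.mul_sum, hgdef, hhdef]
      ring
    simp only [hrw]
    rw [intervalIntegral.integral_add ((hiC.const_mul (w d * p d))) hiD,
      intervalIntegral.integral_const_mul, hCdef, hDdef]
  have hD : D ≤ Aint w p T := by
    rw [hDdef, Aint]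
    apply intervalIntegral.integral_mono_on (by norm_num) hiD hih
    intro t ht
    have h1 : 1 - p d + p d * t ≤ 1 := by nlinarith [ht.2]
    have h2 : 0 ≤ 1 - p d + p d * t := by nlinarith [ht.1]
    have h3 : 0 ≤ h t := hhnn t ht
    have h4 : 0 ≤ 1 - t := by linarith [ht.2]
    nlinarith [mul_nonneg (mul_nonneg h4 h3) (sub_nonneg.mpr h1)]
  -- final arithmetic
  have hAle : Aint w p (insert d T) ≤ 3 * w d * Bint p (insert d T) := by
    rw [hAins, hBins]
    have hwd := hw d
    have hAT : Aint w p T ≤ w d * B := hA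
    have hpC : p d * C ≤ C := by nlinarith
    nlinarith [mul_nonneg hwd hC0, mul_nonneg hwd (mul_nonneg hpd0 hC0),
      mul_nonneg hwd (by linarith : (0:ℝ) ≤ B / 2 - C),
      mul_nonneg hwd (by nlinarith : (0:ℝ) ≤ C - p d * C)]
  have hBip : 0 < Bint p (insert d T) := lt_of_lt_of_le (by linarith) hBinspos
  rw [tau, div_le_iff₀ hBip]
  exact hAle
end

section
/- Let S be a finite set of drivers with weights wⱼ ∈ [0,1] and independent Bernoulli acceptance probabilities pⱼ ∈ [0,1]. Define the First-Accept valuation F(S) (expected weight of a uniformly random accepting driver, 0 if none accepts) and the MNL surrogate F^MNL(S) = Σ_{j∈S} wⱼ pⱼ / (1 + Σ_{k∈S} pₖ). Then F^MNL(S) ≤ F(S). -/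
open Finset

/-- The MNL surrogate valuation `F^MNL(S) = Σ_{j∈S} wⱼpⱼ / (1 + Σ_{k∈S} pₖ)`. -/
noncomputable def FMNL {ι : Type*} (w p : ι → ℝ) (S : Finset ι) : ℝ :=
  (∑ j ∈ S, w j * p j) / (1 + ∑ k ∈ S, p k)

noncomputable def bInd {ι : Type*} (j : ι) (x : ι → Bool) : ℝ := if x j then 1 else 0

lemma moment {ι : Type*} [Fintype ι] [DecidableEq ι] (p : ι → ℝ) (T : Finset ι) :
    ∑ x : ι → Bool, bernWeight p x * ∏ m ∈ T, bInd m x = ∏ m ∈ T, p m := by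
  have h1 : ∀ x : ι → Bool, bernWeight p x * ∏ m ∈ T, bInd m x
      = ∏ m : ι, ((if x m then p m else 1 - p m) *
          (if m ∈ T then (if x m then (1:ℝ) else 0) else 1)) := by
    intro x
    rw [Finset.prod_mul_distrib]
    congr 1
    rw [Finset.prod_ite_mem, Finset.univ_inter]
    rfl
  simp_rw [h1]
  rw [← Fintype.piFinset_univ]
  rw [← Finset.prod_univ_sum (fun _ : ι => (Finset.univ : Finset Bool))
    (fun m b => (if b then p m else 1 - p m) * (if m ∈ T then (if b then (1:ℝ) else 0) else 1))]
  have h2 : ∀ m, (∑ b : Bool, (if b then p m else 1 - p m) *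
      (if m ∈ T then (if b then (1:ℝ) else 0) else 1)) = if m ∈ T then p m else 1 := by
    intro m
    rw [Fintype.sum_bool]
    by_cases hm : m ∈ T <;> simp [hm]
  simp_rw [h2]
  rw [Finset.prod_ite_mem, Finset.univ_inter]

lemma moment1 {ι : Type*} [Fintype ι] [DecidableEq ι] (p : ι → ℝ) (j : ι) :
    ∑ x : ι → Bool, bernWeight p x * bInd j x = p j := by
  have := moment p {j}
  simpa using this

lemma moment2 {ι : Type*} [Fintype ι] [DecidableEq ι] (p : ι → ℝ) (j k : ι) :
    ∑ x : ι → Bool, bernWeight p x * (bInd j x * bInd k x)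
      = if j = k then p j else p j * p k := by
  by_cases h : j = k
  · subst h
    simp only [if_pos rfl]
    have hid : ∀ x : ι → Bool, bInd j x * bInd j x = bInd j x := by
      intro x; unfold bInd; split <;> ring
    simp_rw [hid]
    exact moment1 p j
  · rw [if_neg h]
    have := moment p {j, k}
    simp only [Finset.prod_pair h] at this
    exact this

lemma bernWeight_nonneg {ι : Type*} [Fintype ι] (p : ι → ℝ)
    (hp : ∀ j, 0 ≤ p j ∧ p j ≤ 1) (x : ι → Bool) : 0 ≤ bernWeight p x := by
  apply Finset.prod_nonneg
  intro k _
  split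
  · exact (hp k).1
  · linarith [(hp k).2]

/-- Lower bound: the MNL surrogate never exceeds the First-Accept valuation. -/
theorem stmt_10 {ι : Type*} [Fintype ι] [DecidableEq ι]
    (w p : ι → ℝ)
    (hw : ∀ j, 0 ≤ w j ∧ w j ≤ 1)
    (hp : ∀ j, 0 ≤ p j ∧ p j ≤ 1)
    (S : Finset ι) :
    FMNL w p S ≤ FA w p S := by
  classical
  set c := ∑ k ∈ S, p k with hc
  have hc0 : 0 ≤ c := Finset.sum_nonneg fun k _ => (hp k).1
  have ha : (0:ℝ) < 1 + c := by linarith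
  set A := (1:ℝ)/(1+c) with hA
  set B := (1:ℝ)/(1+c)^2 with hB
  have hB0 : 0 ≤ B := by positivity
  set W : (ι → Bool) → ℝ := fun x => ∑ j ∈ S.filter (fun j => x j = true), w j with hW
  set N : (ι → Bool) → ℝ := fun x => ((S.filter (fun j => x j = true)).card : ℝ) with hN
  -- W as an indicator sum
  have hWsum : ∀ x, W x = ∑ j ∈ S, w j * bInd j x := by
    intro x
    simp only [hW]
    rw [Finset.sum_filter]
    apply Finset.sum_congr rfl
    intro j _
    unfold bInd
    split <;> ring
  have hNsum : ∀ x, N x = ∑ k ∈ S, bInd k x := by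
    intro x
    simp only [hN]
    rw [Finset.card_filter]
    push_cast
    apply Finset.sum_congr rfl
    intro k _
    unfold bInd
    split <;> simp_all
  have hWnn : ∀ x, 0 ≤ W x := by
    intro x
    exact Finset.sum_nonneg fun j _ => (hw j).1
  set Wp := ∑ j ∈ S, w j * p j with hWp
  set R := ∑ j ∈ S, w j * (p j * p j) with hR
  have hR0 : 0 ≤ R := Finset.sum_nonneg fun j _ => by
    have := (hw j).1; have := (hp j).1; positivity
  -- first moment of W
  have sumW : ∑ x : ι → Bool, bernWeight p x * W x = Wp := by
    simp_rw [hWsum, Finset.mul_sum]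
    rw [Finset.sum_comm]
    apply Finset.sum_congr rfl
    intro j _
    have : ∑ x : ι → Bool, bernWeight p x * (w j * bInd j x)
        = w j * ∑ x : ι → Bool, bernWeight p x * bInd j x := by
      rw [Finset.mul_sum]; apply Finset.sum_congr rfl; intro x _; ring
    rw [this, moment1]
  -- second moment
  have sumWN : ∑ x : ι → Bool, bernWeight p x * (W x * N x) = c * Wp + Wp - R := by
    have step : ∑ x : ι → Bool, bernWeight p x * (W x * N x)
        = ∑ j ∈ S, ∑ k ∈ S, w j * (if j = k then p j else p j * p k) := by
      simp_rw [hWsum, hNsum, Finset.sum_mul_sum, Finset.mul_sum]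
      rw [Finset.sum_comm]
      apply Finset.sum_congr rfl
      intro j _
      rw [Finset.sum_comm]
      apply Finset.sum_congr rfl
      intro k _
      have : ∑ x : ι → Bool, bernWeight p x * (w j * bInd j x * (bInd k x))
          = w j * ∑ x : ι → Bool, bernWeight p x * (bInd j x * bInd k x) := by
        rw [Finset.mul_sum]; apply Finset.sum_congr rfl; intro x _; ring
      rw [this, moment2]
    rw [step]
    have inner : ∀ j ∈ S, ∑ k ∈ S, w j * (if j = k then p j else p j * p k)
        = w j * p j * c + w j * p j - w j * (p j * p j) := by
      intro j hj
      rw [← Finset.add_sum_erase S _ hj, if_pos rfl]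
      have : ∑ k ∈ S.erase j, w j * (if j = k then p j else p j * p k)
          = ∑ k ∈ S.erase j, w j * (p j * p k) := by
        apply Finset.sum_congr rfl
        intro k hk
        rw [if_neg (Ne.symm (Finset.ne_of_mem_erase hk))]
      rw [this]
      have herase : ∑ k ∈ S.erase j, p k = c - p j := by
        rw [hc, Finset.sum_erase_eq_sub hj]
      have : ∑ k ∈ S.erase j, w j * (p j * p k) = w j * p j * (c - p j) := by
        rw [← herase, Finset.mul_sum]
        exact Finset.sum_congr rfl fun k _ => by ring
      rw [this]; ring
    rw [Finset.sum_congr rfl inner]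
    have e1 : ∑ j ∈ S, w j * p j * c = c * Wp := by
      rw [hWp, Finset.mul_sum]
      exact Finset.sum_congr rfl fun j _ => by ring
    rw [Finset.sum_sub_distrib, Finset.sum_add_distrib, e1, hWp, hR]
  -- pointwise tangent bound
  have tangent : ∀ n : ℝ, 1 ≤ n → A + (1 + c - n) * B ≤ 1 / n := by
    intro n hn
    have hn0 : (0:ℝ) < n := by linarith
    have key : 1 / n - (A + (1 + c - n) * B) = (1 + c - n)^2 / (n * (1 + c)^2) := by
      rw [hA, hB]
      field_simp
      ring
    have hpos : 0 ≤ (1 + c - n)^2 / (n * (1 + c)^2) := by positivity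
    linarith
  have pointwise : ∀ x : ι → Bool,
      bernWeight p x * (W x * (A + (1 + c - N x) * B)) ≤ bernWeight p x * (W x / N x) := by
    intro x
    have hbw := bernWeight_nonneg p hp x
    by_cases h0 : (S.filter (fun j => x j = true)).card = 0
    · have hWe : W x = 0 := by
        simp only [hW]
        rw [Finset.card_eq_zero] at h0
        rw [h0, Finset.sum_empty]
      rw [hWe]
      simp
    · have hn : 1 ≤ N x := by
        simp only [hN]
        exact_mod_cast Nat.one_le_iff_ne_zero.mpr h0
      have htan := tangent (N x) hn
      have hNx0 : (0:ℝ) < N x := by linarith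
      apply mul_le_mul_of_nonneg_left _ hbw
      rw [div_eq_mul_one_div (W x) (N x)]
      exact mul_le_mul_of_nonneg_left htan (hWnn x)
  have hsum : ∑ x : ι → Bool, bernWeight p x * (W x * (A + (1 + c - N x) * B))
      ≤ ∑ x : ι → Bool, bernWeight p x * (W x / N x) :=
    Finset.sum_le_sum fun x _ => pointwise x
  -- compute lower-bound sum
  have lhs_eq : ∑ x : ι → Bool, bernWeight p x * (W x * (A + (1 + c - N x) * B))
      = A * Wp + B * R := by
    have expand : ∀ x : ι → Bool, bernWeight p x * (W x * (A + (1 + c - N x) * B))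
        = A * (bernWeight p x * W x) + ((1 + c) * B) * (bernWeight p x * W x)
          - B * (bernWeight p x * (W x * N x)) := by
      intro x; ring
    rw [Finset.sum_congr rfl (fun x _ => expand x)]
    rw [Finset.sum_sub_distrib, Finset.sum_add_distrib, ← Finset.mul_sum, ← Finset.mul_sum,
      ← Finset.mul_sum, sumW, sumWN]
    rw [hA, hB]
    field_simp
    ring
  have hFA : FA w p S = ∑ x : ι → Bool, bernWeight p x * (W x / N x) := rfl
  have final : A * Wp + B * R ≤ FA w p S := by
    rw [← lhs_eq, hFA]
    exact hsum
  have hFMNL : FMNL w p S = A * Wp := by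
    rw [FMNL, hA, hWp, ← hc]
    field_simp
  rw [hFMNL]
  have : 0 ≤ B * R := mul_nonneg hB0 hR0
  linarith
end

section
/- Let S be a finite set of drivers with weights wⱼ ∈ [0,1] and independent Bernoulli acceptance probabilities pⱼ ∈ [0,1]. Then the First-Accept valuation satisfies F(S) ≤ 2 · F^MNL(S), where F^MNL(S) = Σ_{j∈S} wⱼ pⱼ / (1 + Σ_{k∈S} pₖ). -/
/-!
Driver `j` is the one chosen with probability `E[1{j accepts} / (1 + N)]`, where `N` counts the
other accepting drivers. Writing `1 / (n + 1) = ∫₀¹ (1 - u)ⁿ du` and using independence, this is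
`pⱼ ∫₀¹ ∏_{k ≠ j} (1 - u pₖ) du ≤ pⱼ ∫₀¹ e^{-uQ} du = pⱼ (1 - e^{-Q}) / Q` with `Q = Σ_{k ≠ j} pₖ`.
The Padé bound `e^{-Q} ≥ (2 - Q) / (2 + Q)` turns this into `2 pⱼ / (2 + Q) ≤ 2 pⱼ / (1 + Σₖ pₖ)`.
-/

open Finset

open Real

theorem Real.two_sub_le_two_add_mul_exp_neg {x : ℝ} (hx : 0 ≤ x) :
    2 - x ≤ (2 + x) * exp (-x) := by
  rcases lt_or_ge x 2 with hx2 | hx2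
  · have h := exp_le_two_add_div_two_sub hx hx2
    rw [le_div_iff₀ (by linarith)] at h
    have : exp x * exp (-x) = 1 := by rw [← exp_add, add_neg_cancel, exp_zero]
    nlinarith [exp_pos (-x)]
  · nlinarith [exp_pos (-x)]

theorem Real.prod_one_sub_le_exp_neg_sum {ι : Type*} (s : Finset ι) {f : ι → ℝ}
    (hf : ∀ i ∈ s, f i ≤ 1) : ∏ i ∈ s, (1 - f i) ≤ exp (-∑ i ∈ s, f i) := by
  rw [← sum_neg_distrib, exp_sum]
  exact prod_le_prod (fun i hi ↦ sub_nonneg.2 (hf i hi)) fun i _ ↦ one_sub_le_exp_neg _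

theorem intervalIntegral.integral_one_sub_pow (n : ℕ) :
    ∫ u in (0:ℝ)..1, (1 - u) ^ n = 1 / (n + 1) := by
  simp [intervalIntegral.integral_comp_sub_left (fun u => u ^ n)]

theorem integral_exp_neg_mul {Q : ℝ} (hQ : Q ≠ 0) :
    ∫ u in (0:ℝ)..1, exp (-(Q * u)) = (1 - exp (-Q)) / Q := by
  have h := intervalIntegral.integral_comp_mul_left (a := 0) (b := 1) exp (neg_ne_zero.2 hQ)
  simp only [neg_mul] at h
  rw [h, integral_exp, smul_eq_mul, mul_zero, neg_zero, exp_zero, mul_one]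
  field_simp
  ring

theorem integral_exp_neg_mul_le {Q : ℝ} (hQ : 0 ≤ Q) :
    ∫ u in (0:ℝ)..1, exp (-(Q * u)) ≤ 2 / (2 + Q) := by
  rcases hQ.eq_or_lt with rfl | hQ
  · simp
  rw [integral_exp_neg_mul hQ.ne', div_le_div_iff₀ hQ (by linarith)]
  linarith [two_sub_le_two_add_mul_exp_neg hQ.le]

theorem integral_prod_one_sub_mul_le {ι : Type*} {p : ι → ℝ} {A : Finset ι}
    (hp : ∀ k ∈ A, 0 ≤ p k ∧ p k ≤ 1) :
    ∫ u in (0:ℝ)..1, ∏ k ∈ A, (1 - u * p k) ≤ 2 / (2 + ∑ k ∈ A, p k) := by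
  have hQ : 0 ≤ ∑ k ∈ A, p k := sum_nonneg fun k hk => (hp k hk).1
  calc ∫ u in (0:ℝ)..1, ∏ k ∈ A, (1 - u * p k)
      ≤ ∫ u in (0:ℝ)..1, exp (-((∑ k ∈ A, p k) * u)) := by
        refine intervalIntegral.integral_mono_on zero_le_one
          (by apply Continuous.intervalIntegrable; fun_prop)
          (by apply Continuous.intervalIntegrable; fun_prop) fun u hu => ?_
        refine (prod_one_sub_le_exp_neg_sum A fun k hk => ?_).trans_eq (by rw [← mul_sum, mul_comm])
        exact mul_le_one₀ hu.2 (hp k hk).1 (hp k hk).2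
    _ ≤ 2 / (2 + ∑ k ∈ A, p k) := integral_exp_neg_mul_le hQ

section Drivers

variable {ι : Type*} [Fintype ι] [DecidableEq ι]

theorem sum_bernWeight_mul_prod (p : ι → ℝ) (g : ι → Bool → ℝ) :
    ∑ x : ι → Bool, bernWeight p x * ∏ k, g k (x k) =
      ∏ k, (p k * g k true + (1 - p k) * g k false) := calc
  _ = ∑ x : ι → Bool, ∏ k, (if x k then p k else 1 - p k) * g k (x k) := by
    simp only [bernWeight, prod_mul_distrib]
  _ = ∏ k, ∑ b : Bool, (if b then p k else 1 - p k) * g k b := by rw [Fintype.prod_sum]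
  _ = _ := by simp only [Fintype.sum_bool, if_true, Bool.false_eq_true, if_false]

theorem sum_bernWeight_mul_prod_finset (p : ι → ℝ) (s : Finset ι) (g : ι → Bool → ℝ) :
    ∑ x : ι → Bool, bernWeight p x * ∏ k ∈ s, g k (x k) =
      ∏ k ∈ s, (p k * g k true + (1 - p k) * g k false) := by
  have h := sum_bernWeight_mul_prod p fun k b => if k ∈ s then g k b else 1
  simp only [Fintype.prod_ite_mem] at h
  rw [h, ← Fintype.prod_ite_mem s]
  refine prod_congr rfl fun k _ => ?_
  split_ifs <;> ring

theorem sum_bernWeight_mul_ite_pow (p : ι → ℝ) {T : Finset ι} {j : ι} (hj : j ∉ T) (u : ℝ) :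
    ∑ x : ι → Bool, bernWeight p x *
        (if x j then (1 - u) ^ (T.filter (fun k => x k = true)).card else 0) =
      p j * ∏ k ∈ T, (1 - u * p k) := by
  let g : ι → Bool → ℝ := fun k b =>
    if k = j then (if b then 1 else 0) else (if b then 1 - u else 1)
  have hT : ∀ k ∈ T, ∀ b, g k b = if b then 1 - u else 1 := fun k hk b => by
    simp only [g, if_neg (ne_of_mem_of_not_mem hk hj)]
  have hg : ∀ x : ι → Bool,
      (if x j then (1 - u) ^ (T.filter (fun k => x k = true)).card else 0) =
        ∏ k ∈ insert j T, g k (x k) := fun x => by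
    rw [prod_insert hj, prod_congr rfl fun k hk => hT k hk (x k), ← prod_filter, prod_const]
    cases x j <;> simp [g]
  simp_rw [hg]
  rw [sum_bernWeight_mul_prod_finset, prod_insert hj]
  congr 1
  · simp [g]
  · refine prod_congr rfl fun k hk => ?_
    simp only [hT k hk, if_true, Bool.false_eq_true, if_false]
    ring

noncomputable def selectionProb (p : ι → ℝ) (S : Finset ι) (j : ι) : ℝ :=
  ∑ x : ι → Bool, bernWeight p x *
    if x j then ((S.filter (fun k => x k = true)).card : ℝ)⁻¹ else 0

theorem FA_eq_sum_mul_selectionProb (w p : ι → ℝ) (S : Finset ι) :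
    FA w p S = ∑ j ∈ S, w j * selectionProb p S j := by
  simp only [FA, selectionProb, mul_sum]
  rw [sum_comm]
  refine sum_congr rfl fun x _ => ?_
  rw [sum_div, mul_sum, sum_filter]
  refine sum_congr rfl fun j _ => ?_
  split_ifs <;> ring

theorem selectionProb_eq_integral (p : ι → ℝ) {S : Finset ι} {j : ι} (hj : j ∈ S) :
    selectionProb p S j = p j * ∫ u in (0:ℝ)..1, ∏ k ∈ S.erase j, (1 - u * p k) := by
  have hcard : ∀ x : ι → Bool, x j →
      ((S.filter (fun k => x k = true)).card : ℝ) =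
        ((S.erase j).filter (fun k => x k = true)).card + 1 := fun x hx => by
    rw [filter_erase]
    exact_mod_cast (card_erase_add_one (mem_filter.2 ⟨hj, hx⟩)).symm
  rw [← intervalIntegral.integral_const_mul]
  simp_rw [← sum_bernWeight_mul_ite_pow p (notMem_erase j S)]
  rw [intervalIntegral.integral_finsetSum]
  · refine sum_congr rfl fun x _ => ?_
    rw [intervalIntegral.integral_const_mul]
    cases hx : x j
    · simp
    · simp [hcard x hx, intervalIntegral.integral_one_sub_pow]
  · intro x _
    apply Continuous.intervalIntegrable
    split_ifs <;> fun_prop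

theorem selectionProb_le {p : ι → ℝ} {S : Finset ι} (hp : ∀ k ∈ S, 0 ≤ p k ∧ p k ≤ 1)
    {j : ι} (hj : j ∈ S) :
    selectionProb p S j ≤ 2 * p j / (1 + ∑ k ∈ S, p k) := by
  have hsplit : p j + ∑ k ∈ S.erase j, p k = ∑ k ∈ S, p k := add_sum_erase S p hj
  have hQ : 0 ≤ ∑ k ∈ S.erase j, p k := sum_nonneg fun k hk => (hp k (mem_of_mem_erase hk)).1
  have hpj := hp j hj
  rw [selectionProb_eq_integral p hj]
  calc p j * ∫ u in (0:ℝ)..1, ∏ k ∈ S.erase j, (1 - u * p k)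
      ≤ p j * (2 / (2 + ∑ k ∈ S.erase j, p k)) :=
        mul_le_mul_of_nonneg_left
          (integral_prod_one_sub_mul_le fun k hk => hp k (mem_of_mem_erase hk)) hpj.1
    _ ≤ p j * (2 / (1 + ∑ k ∈ S, p k)) :=
        mul_le_mul_of_nonneg_left
          (div_le_div_of_nonneg_left zero_le_two (by linarith) (by linarith)) hpj.1
    _ = 2 * p j / (1 + ∑ k ∈ S, p k) := by ring

end Drivers

/-- Upper bound: the First-Accept valuation is at most twice the MNL surrogate. -/
theorem stmt_11 {ι : Type*} [Fintype ι] [DecidableEq ι]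
    (w p : ι → ℝ)
    (hw : ∀ j, 0 ≤ w j ∧ w j ≤ 1)
    (hp : ∀ j, 0 ≤ p j ∧ p j ≤ 1)
    (S : Finset ι) :
    FA w p S ≤ 2 * FMNL w p S := by
  calc FA w p S = ∑ j ∈ S, w j * selectionProb p S j := FA_eq_sum_mul_selectionProb w p S
    _ ≤ ∑ j ∈ S, w j * (2 * p j / (1 + ∑ k ∈ S, p k)) :=
        sum_le_sum fun j hj =>
          mul_le_mul_of_nonneg_left (selectionProb_le (fun k _ => hp k) hj) (hw j).1
    _ = 2 * FMNL w p S := by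
        rw [FMNL, mul_div_assoc', mul_sum, sum_div]
        exact sum_congr rfl fun j _ => by ring
end
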